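/- Coordinate form of Lemma 3.5. Let U ⊆ ℂ be open, let λ₀, λ, ψ : U → ℂ be C¹ and w, η : U → ℂ be C² (in the real-differentiable sense), and let p ∈ U. Assume that on all of U: (i) λ₀ + ψ·∂w = λ·∂η and ψ·∂̄w = λ·∂̄η (the translation of the 1-form identity λ₀ dz + ψ dw = λ dη); and (ii) ∂ψ·∂̄w = ∂̄ψ·∂w (the translation of dψ ∧ dw = 0, expressing that ψ dw² is a holomorphic quadratic differential in the coordinate w). If λ₀(p) ≠ 0, λ(p) ≠ 0, ∂̄w(p) ≠ 0, and (∂̄w·∂η − ∂w·∂̄η)(p) ≠ 0, then ∂̄λ₀(p) / (λ₀(p)·∂̄w(p)) = (∂̄λ(p)·∂η(p) − ∂λ(p)·∂̄η(p)) / (λ(p)·(∂̄w(p)·∂η(p) − ∂w(p)·∂̄η(p))). (This is the identity ∂_z̄(log λ₀)/∂_z̄ w = ∂_η̄(log λ)/∂_η̄ w of Lemma 3.5, with ∂_η̄ expressed via the chain rule: since ∂_η̄ g = (∂̄g·∂η − ∂g·∂̄η)/Jac(η), the Jacobian factor cancels in the ratio.) -/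

import Mathlib

open Complex

/-- The Wirtinger derivative `∂f(q) = (1/2)(Df(q)(1) - i·Df(q)(i))`, where `Df(q)` is the
real Fréchet derivative of `f` at `q`. -/
noncomputable def wirtDeriv (f : ℂ → ℂ) (q : ℂ) : ℂ :=
  (1 / 2 : ℂ) * (fderiv ℝ f q 1 - Complex.I * fderiv ℝ f q Complex.I)

/-- The conjugate Wirtinger derivative `∂̄f(q) = (1/2)(Df(q)(1) + i·Df(q)(i))`. -/
noncomputable def wirtDerivBar (f : ℂ → ℂ) (q : ℂ) : ℂ :=
  (1 / 2 : ℂ) * (fderiv ℝ f q 1 + Complex.I * fderiv ℝ f q Complex.I)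

lemma wirtDeriv_add {f g : ℂ → ℂ} {p : ℂ} (hf : DifferentiableAt ℝ f p)
    (hg : DifferentiableAt ℝ g p) :
    wirtDeriv (fun x => f x + g x) p = wirtDeriv f p + wirtDeriv g p := by
  unfold wirtDeriv
  rw [fderiv_fun_add hf hg]
  simp only [ContinuousLinearMap.add_apply]
  ring

lemma wirtDerivBar_add {f g : ℂ → ℂ} {p : ℂ} (hf : DifferentiableAt ℝ f p)
    (hg : DifferentiableAt ℝ g p) :
    wirtDerivBar (fun x => f x + g x) p = wirtDerivBar f p + wirtDerivBar g p := by
  unfold wirtDerivBar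
  rw [fderiv_fun_add hf hg]
  simp only [ContinuousLinearMap.add_apply]
  ring

lemma wirtDeriv_mul {f g : ℂ → ℂ} {p : ℂ} (hf : DifferentiableAt ℝ f p)
    (hg : DifferentiableAt ℝ g p) :
    wirtDeriv (fun x => f x * g x) p = wirtDeriv f p * g p + f p * wirtDeriv g p := by
  unfold wirtDeriv
  rw [fderiv_fun_mul hf hg]
  simp only [ContinuousLinearMap.add_apply, ContinuousLinearMap.smul_apply, smul_eq_mul]
  ring

lemma wirtDerivBar_mul {f g : ℂ → ℂ} {p : ℂ} (hf : DifferentiableAt ℝ f p)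
    (hg : DifferentiableAt ℝ g p) :
    wirtDerivBar (fun x => f x * g x) p = wirtDerivBar f p * g p + f p * wirtDerivBar g p := by
  unfold wirtDerivBar
  rw [fderiv_fun_mul hf hg]
  simp only [ContinuousLinearMap.add_apply, ContinuousLinearMap.smul_apply, smul_eq_mul]
  ring

lemma wirtDeriv_congr {f g : ℂ → ℂ} {p : ℂ} (h : f =ᶠ[nhds p] g) :
    wirtDeriv f p = wirtDeriv g p := by
  unfold wirtDeriv; rw [h.fderiv_eq]

lemma wirtDerivBar_congr {f g : ℂ → ℂ} {p : ℂ} (h : f =ᶠ[nhds p] g) :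
    wirtDerivBar f p = wirtDerivBar g p := by
  unfold wirtDerivBar; rw [h.fderiv_eq]


lemma hasFDerivAt_fderiv_apply {w : ℂ → ℂ} {p : ℂ} (hw : ContDiffAt ℝ 2 w p) (z : ℂ) :
    HasFDerivAt (fun q => fderiv ℝ w q z)
      ((ContinuousLinearMap.apply ℝ ℂ z).comp (fderiv ℝ (fderiv ℝ w) p)) p := by
  have hF : HasFDerivAt (fderiv ℝ w) (fderiv ℝ (fderiv ℝ w) p) p :=
    ((hw.fderiv_right (m := 1) (by norm_num)).differentiableAt one_ne_zero).hasFDerivAt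
  exact (ContinuousLinearMap.apply ℝ ℂ z).hasFDerivAt.comp p hF

lemma hasFDerivAt_wirtDeriv {w : ℂ → ℂ} {p : ℂ} (hw : ContDiffAt ℝ 2 w p) :
    HasFDerivAt (wirtDeriv w)
      ((1/2 : ℂ) • ((((ContinuousLinearMap.apply ℝ ℂ 1).comp (fderiv ℝ (fderiv ℝ w) p))
        - Complex.I • ((ContinuousLinearMap.apply ℝ ℂ Complex.I).comp (fderiv ℝ (fderiv ℝ w) p)) : ℂ →L[ℝ] ℂ))) p := by
  have h1 := hasFDerivAt_fderiv_apply hw 1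
  have hi := hasFDerivAt_fderiv_apply hw Complex.I
  exact (h1.sub (hi.const_mul Complex.I)).const_mul (1/2 : ℂ)

lemma hasFDerivAt_wirtDerivBar {w : ℂ → ℂ} {p : ℂ} (hw : ContDiffAt ℝ 2 w p) :
    HasFDerivAt (wirtDerivBar w)
      ((1/2 : ℂ) • ((((ContinuousLinearMap.apply ℝ ℂ 1).comp (fderiv ℝ (fderiv ℝ w) p))
        + Complex.I • ((ContinuousLinearMap.apply ℝ ℂ Complex.I).comp (fderiv ℝ (fderiv ℝ w) p)) : ℂ →L[ℝ] ℂ))) p := by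
  have h1 := hasFDerivAt_fderiv_apply hw 1
  have hi := hasFDerivAt_fderiv_apply hw Complex.I
  exact (h1.add (hi.const_mul Complex.I)).const_mul (1/2 : ℂ)

lemma diffAt_wirtDeriv {w : ℂ → ℂ} {p : ℂ} (hw : ContDiffAt ℝ 2 w p) :
    DifferentiableAt ℝ (wirtDeriv w) p := (hasFDerivAt_wirtDeriv hw).differentiableAt

lemma diffAt_wirtDerivBar {w : ℂ → ℂ} {p : ℂ} (hw : ContDiffAt ℝ 2 w p) :
    DifferentiableAt ℝ (wirtDerivBar w) p := (hasFDerivAt_wirtDerivBar hw).differentiableAt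

lemma wirt_comm {w : ℂ → ℂ} {p : ℂ} (hw : ContDiffAt ℝ 2 w p) :
    wirtDerivBar (wirtDeriv w) p = wirtDeriv (wirtDerivBar w) p := by
  have hsym : fderiv ℝ (fderiv ℝ w) p 1 Complex.I = fderiv ℝ (fderiv ℝ w) p Complex.I 1 :=
    (hw.isSymmSndFDerivAt (by norm_num)) 1 Complex.I
  rw [wirtDerivBar, wirtDeriv, (hasFDerivAt_wirtDeriv hw).fderiv,
    (hasFDerivAt_wirtDerivBar hw).fderiv]
  simp only [ContinuousLinearMap.smul_apply, ContinuousLinearMap.sub_apply,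
    ContinuousLinearMap.add_apply, ContinuousLinearMap.comp_apply,
    ContinuousLinearMap.apply_apply, smul_eq_mul]
  rw [hsym]; ring
/-- Coordinate form of Lemma 3.5. Suppose on an open set `U` one has the
1-form identity `λ₀ dz + ψ dw = λ dη` (translated as `λ₀ + ψ·∂w = λ·∂η` and
`ψ·∂̄w = λ·∂̄η`), with `λ₀, λ, ψ` of class `C¹` and `w, η` of class `C²`, and
`∂ψ·∂̄w = ∂̄ψ·∂w` on `U` (i.e. `dψ ∧ dw = 0`, so `ψ dw²` is a holomorphic quadratic
differential in the coordinate `w`). If at `p ∈ U` we have `λ₀(p) ≠ 0`, `λ(p) ≠ 0`,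
`∂̄w(p) ≠ 0` and `(∂̄w·∂η − ∂w·∂̄η)(p) ≠ 0`, then
`∂̄λ₀(p)/(λ₀(p)·∂̄w(p)) = (∂̄λ(p)·∂η(p) − ∂λ(p)·∂̄η(p))/(λ(p)·(∂̄w(p)·∂η(p) − ∂w(p)·∂̄η(p)))`,
i.e. `∂_z̄ (log λ₀)/∂_z̄ w = ∂_η̄ (log λ)/∂_η̄ w`. -/
theorem wirtinger_lemma_3_5
    (U : Set ℂ) (hU : IsOpen U) (p : ℂ) (hp : p ∈ U)
    (lam0 lam psi w eta : ℂ → ℂ)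
    (hlam0 : ContDiffOn ℝ 1 lam0 U) (hlam : ContDiffOn ℝ 1 lam U)
    (hpsi : ContDiffOn ℝ 1 psi U)
    (hw : ContDiffOn ℝ 2 w U) (heta : ContDiffOn ℝ 2 eta U)
    (heq1 : ∀ q ∈ U, lam0 q + psi q * wirtDeriv w q = lam q * wirtDeriv eta q)
    (heq2 : ∀ q ∈ U, psi q * wirtDerivBar w q = lam q * wirtDerivBar eta q)
    (hquad : ∀ q ∈ U, wirtDeriv psi q * wirtDerivBar w q = wirtDerivBar psi q * wirtDeriv w q)
    (hlam0p : lam0 p ≠ 0) (hlamp : lam p ≠ 0)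
    (hwbarp : wirtDerivBar w p ≠ 0)
    (hjac : wirtDerivBar w p * wirtDeriv eta p - wirtDeriv w p * wirtDerivBar eta p ≠ 0) :
    wirtDerivBar lam0 p / (lam0 p * wirtDerivBar w p)
      = (wirtDerivBar lam p * wirtDeriv eta p - wirtDeriv lam p * wirtDerivBar eta p) /
        (lam p * (wirtDerivBar w p * wirtDeriv eta p - wirtDeriv w p * wirtDerivBar eta p)) := by
  have hmem := hU.mem_nhds hp
  have hl0 : DifferentiableAt ℝ lam0 p := (hlam0.contDiffAt hmem).differentiableAt one_ne_zero
  have hl : DifferentiableAt ℝ lam p := (hlam.contDiffAt hmem).differentiableAt one_ne_zero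
  have hps : DifferentiableAt ℝ psi p := (hpsi.contDiffAt hmem).differentiableAt one_ne_zero
  have hw2 : ContDiffAt ℝ 2 w p := hw.contDiffAt hmem
  have he2 : ContDiffAt ℝ 2 eta p := heta.contDiffAt hmem
  have e1 : (fun q => lam0 q + psi q * wirtDeriv w q) =ᶠ[nhds p]
      (fun q => lam q * wirtDeriv eta q) := by
    filter_upwards [hmem] with q hq using heq1 q hq
  have e2 : (fun q => psi q * wirtDerivBar w q) =ᶠ[nhds p]
      (fun q => lam q * wirtDerivBar eta q) := by
    filter_upwards [hmem] with q hq using heq2 q hq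
  have K1 : wirtDerivBar lam0 p
      + (wirtDerivBar psi p * wirtDeriv w p + psi p * wirtDerivBar (wirtDeriv w) p)
      = wirtDerivBar lam p * wirtDeriv eta p + lam p * wirtDerivBar (wirtDeriv eta) p := by
    have h := wirtDerivBar_congr e1
    rw [wirtDerivBar_add (g := fun q => psi q * wirtDeriv w q) hl0 (hps.mul (diffAt_wirtDeriv hw2))] at h
    rw [wirtDerivBar_mul hps (diffAt_wirtDeriv hw2)] at h
    rw [wirtDerivBar_mul hl (diffAt_wirtDeriv he2)] at h
    exact h
  have K2 : wirtDeriv psi p * wirtDerivBar w p + psi p * wirtDeriv (wirtDerivBar w) p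
      = wirtDeriv lam p * wirtDerivBar eta p + lam p * wirtDeriv (wirtDerivBar eta) p := by
    have h := wirtDeriv_congr e2
    rw [wirtDeriv_mul hps (diffAt_wirtDerivBar hw2)] at h
    rw [wirtDeriv_mul hl (diffAt_wirtDerivBar he2)] at h
    exact h
  have Sw : wirtDerivBar (wirtDeriv w) p = wirtDeriv (wirtDerivBar w) p := wirt_comm hw2
  have Se : wirtDerivBar (wirtDeriv eta) p = wirtDeriv (wirtDerivBar eta) p := wirt_comm he2
  have Q := hquad p hp
  have hnum : wirtDerivBar lam0 p
      = wirtDerivBar lam p * wirtDeriv eta p - wirtDeriv lam p * wirtDerivBar eta p := by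
    linear_combination K1 - K2 + Q - psi p * Sw + lam p * Se
  have hden : lam p * (wirtDerivBar w p * wirtDeriv eta p - wirtDeriv w p * wirtDerivBar eta p)
      = lam0 p * wirtDerivBar w p := by
    linear_combination wirtDeriv w p * heq2 p hp - wirtDerivBar w p * heq1 p hp
  rw [hnum, ← hden]
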